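/- A binary phylogenetic network N is tree-based if and only if N contains no zig-zag path (o₁, r₁, o₂, r₂, …, o_k, r_k, o_{k+1}) with k ≥ 1 such that each r_i is a reticulation and a child of both o_i and o_{i+1}, each o_i is an omnian, and o₁ and o_{k+1} are simultaneously reticulations and omnians, with this zig-zag path maximal in the associated bipartite graph. -/
import Mathlib


/-- Out-degree of `v` in the digraph with arc relation `arc`. -/
def outdeg {V : Type} [Fintype V] [DecidableEq V] (arc : V → V → Bool) (v : V) : ℕ :=
  (Finset.univ.filter fun w => arc v w = true).card

/-- In-degree of `v` in the digraph with arc relation `arc`. -/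
def indeg {V : Type} [Fintype V] [DecidableEq V] (arc : V → V → Bool) (v : V) : ℕ :=
  (Finset.univ.filter fun u => arc u v = true).card

/-- A rooted binary phylogenetic network on the finite vertex type `V`:
a directed acyclic graph with a single root of indegree 0 and outdegree 1 or 2,
all other vertices being leaves (indegree 1, outdegree 0),
reticulations (indegree 2, outdegree 1) or tree-vertices (indegree 1, outdegree 2). -/
structure BinNet (V : Type) [Fintype V] [DecidableEq V] where
  arc : V → V → Bool
  root : V
  acyclic : ∀ v, ¬ Relation.TransGen (fun a b => arc a b = true) v v
  root_indeg : indeg arc root = 0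
  root_outdeg : outdeg arc root = 1 ∨ outdeg arc root = 2
  vertex_types : ∀ v, v ≠ root →
    (indeg arc v = 1 ∧ outdeg arc v = 0) ∨
    (indeg arc v = 2 ∧ outdeg arc v = 1) ∨
    (indeg arc v = 1 ∧ outdeg arc v = 2)

variable {V : Type} [Fintype V] [DecidableEq V]

/-- A leaf of the network. -/
def BinNet.IsLeaf (N : BinNet V) (v : V) : Prop := outdeg N.arc v = 0

/-- A reticulation of the network. -/
def BinNet.IsRetic (N : BinNet V) (v : V) : Prop := indeg N.arc v = 2

/-- A tree-vertex of the network. -/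
def BinNet.IsTreeVertex (N : BinNet V) (v : V) : Prop :=
  v ≠ N.root ∧ indeg N.arc v = 1 ∧ outdeg N.arc v = 2

/-- An omnian: a non-leaf vertex all of whose children are reticulations. -/
def BinNet.IsOmnian (N : BinNet V) (v : V) : Prop :=
  outdeg N.arc v ≠ 0 ∧ ∀ w, N.arc v w = true → N.IsRetic w

/-- `T` is a rooted spanning tree of `N` (using a subset of the arcs of `N`,
every non-root vertex having exactly one incoming tree arc). -/
def BinNet.IsSpanningTree (N : BinNet V) (T : V → V → Bool) : Prop :=
  (∀ u v, T u v = true → N.arc u v = true) ∧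
  (∀ u, T u N.root = false) ∧
  (∀ v, v ≠ N.root → indeg T v = 1)

/-- `N` is tree-based: it has a rooted spanning tree without dummy leaves,
i.e. every leaf of the spanning tree is a leaf of `N`. -/
def BinNet.TreeBased (N : BinNet V) : Prop :=
  ∃ T, N.IsSpanningTree T ∧ ∀ v, outdeg T v = 0 → outdeg N.arc v = 0

/-- `N` contains a zig-zag path `(o 0, r 0, o 1, r 1, …, o (k-1), r (k-1), o k)` with
`k ≥ 1` in which each `r i` is a reticulation and a child of both `o i` and `o (i+1)`,
each `o i` is an omnian, `o 0` and `o k` are simultaneously reticulations and omnians,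
and the path is maximal in the associated bipartite graph: every reticulation child of
an endpoint already lies on the path. -/
def BinNet.HasZigZag {V : Type} [Fintype V] [DecidableEq V] (N : BinNet V) : Prop :=
  ∃ k : ℕ, 1 ≤ k ∧ ∃ (o : Fin (k+1) → V) (r : Fin k → V),
    Function.Injective o ∧ Function.Injective r ∧
    (∀ i : Fin (k+1), N.IsOmnian (o i)) ∧
    (∀ i : Fin k, N.IsRetic (r i) ∧
      N.arc (o i.castSucc) (r i) = true ∧ N.arc (o i.succ) (r i) = true) ∧
    N.IsRetic (o 0) ∧ N.IsRetic (o (Fin.last k)) ∧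
    (∀ w, N.arc (o 0) w = true → N.IsRetic w → ∃ i, r i = w) ∧
    (∀ w, N.arc (o (Fin.last k)) w = true → N.IsRetic w → ∃ i, r i = w)

namespace BinNet
variable {V : Type} [Fintype V] [DecidableEq V] (N : BinNet V)

lemma arc_irrefl (v : V) : N.arc v v ≠ true := fun h => N.acyclic v (Relation.TransGen.single h)

lemma outdeg_le_two (v : V) : outdeg N.arc v ≤ 2 := by
  by_cases h : v = N.root
  · subst h; rcases N.root_outdeg with h | h <;> omega
  · rcases N.vertex_types v h with ⟨_, h2⟩ | ⟨_, h2⟩ | ⟨_, h2⟩ <;> omega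

lemma exists_parent {v : V} (hv : v ≠ N.root) : ∃ u, N.arc u v = true := by
  have h := N.vertex_types v hv
  have h1 : 0 < indeg N.arc v := by rcases h with ⟨h, _⟩ | ⟨h, _⟩ | ⟨h, _⟩ <;> omega
  rw [indeg, Finset.card_pos] at h1
  obtain ⟨u, hu⟩ := h1
  exact ⟨u, (Finset.mem_filter.mp hu).2⟩

lemma exists_child {v : V} (hv : outdeg N.arc v ≠ 0) : ∃ w, N.arc v w = true := by
  have h1 : 0 < outdeg N.arc v := Nat.pos_of_ne_zero hv
  rw [outdeg, Finset.card_pos] at h1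
  obtain ⟨u, hu⟩ := h1
  exact ⟨u, (Finset.mem_filter.mp hu).2⟩

lemma no_arc_to_root {u : V} (h : N.arc u N.root = true) : False := by
  have h1 : 0 < indeg N.arc N.root :=
    Finset.card_pos.mpr ⟨u, Finset.mem_filter.mpr ⟨Finset.mem_univ u, h⟩⟩
  have := N.root_indeg
  omega

lemma arc_ne_root {u v : V} (h : N.arc u v = true) : v ≠ N.root := by
  rintro rfl; exact N.no_arc_to_root h

lemma retic_ne_root {v : V} (h : N.IsRetic v) : v ≠ N.root := by
  rintro rfl
  have := N.root_indeg
  rw [BinNet.IsRetic] at h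
  omega

lemma retic_outdeg {v : V} (h : N.IsRetic v) : outdeg N.arc v = 1 := by
  rcases N.vertex_types v (N.retic_ne_root h) with ⟨h1, h2⟩ | ⟨h1, h2⟩ | ⟨h1, h2⟩ <;>
    rw [BinNet.IsRetic] at h <;> omega

lemma only_child {v c : V} (h1 : outdeg N.arc v = 1) (hc : N.arc v c = true)
    {w : V} (hw : N.arc v w = true) : w = c := by
  have hcm : c ∈ Finset.univ.filter (fun w => N.arc v w = true) :=
    Finset.mem_filter.mpr ⟨Finset.mem_univ c, hc⟩
  have hwm : w ∈ Finset.univ.filter (fun w => N.arc v w = true) :=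
    Finset.mem_filter.mpr ⟨Finset.mem_univ w, hw⟩
  exact Finset.card_le_one.mp (le_of_eq h1) w hwm c hcm

lemma indeg_one_unique {arc : V → V → Bool} {v u w : V} (h1 : indeg arc v = 1)
    (hu : arc u v = true) (hw : arc w v = true) : w = u := by
  have hcm : u ∈ Finset.univ.filter (fun x => arc x v = true) :=
    Finset.mem_filter.mpr ⟨Finset.mem_univ u, hu⟩
  have hwm : w ∈ Finset.univ.filter (fun x => arc x v = true) :=
    Finset.mem_filter.mpr ⟨Finset.mem_univ w, hw⟩
  exact Finset.card_le_one.mp (le_of_eq h1) w hwm u hcm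

lemma only_parent {v u : V} (h1 : indeg N.arc v = 1) (hu : N.arc u v = true)
    {w : V} (hw : N.arc w v = true) : w = u := by
  have hcm : u ∈ Finset.univ.filter (fun x => N.arc x v = true) :=
    Finset.mem_filter.mpr ⟨Finset.mem_univ u, hu⟩
  have hwm : w ∈ Finset.univ.filter (fun x => N.arc x v = true) :=
    Finset.mem_filter.mpr ⟨Finset.mem_univ w, hw⟩
  exact Finset.card_le_one.mp (le_of_eq h1) w hwm u hcm

lemma children_pair {v a b : V} (hab : a ≠ b) (ha : N.arc v a = true) (hb : N.arc v b = true)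
    {w : V} (hw : N.arc v w = true) : w = a ∨ w = b := by
  have hsub : ({a, b} : Finset V) ⊆ Finset.univ.filter (fun w => N.arc v w = true) := by
    intro x hx
    rcases Finset.mem_insert.mp hx with rfl | hx
    · exact Finset.mem_filter.mpr ⟨Finset.mem_univ _, ha⟩
    · rw [Finset.mem_singleton] at hx; subst hx
      exact Finset.mem_filter.mpr ⟨Finset.mem_univ _, hb⟩
  have hcard : (Finset.univ.filter (fun w => N.arc v w = true)).card ≤ ({a, b} : Finset V).card := by
    rw [Finset.card_pair hab]; exact N.outdeg_le_two v
  have heq := Finset.eq_of_subset_of_card_le hsub hcard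
  have hwm : w ∈ ({a, b} : Finset V) := by
    rw [heq]; exact Finset.mem_filter.mpr ⟨Finset.mem_univ _, hw⟩
  rcases Finset.mem_insert.mp hwm with rfl | hwm
  · exact Or.inl rfl
  · exact Or.inr (Finset.mem_singleton.mp hwm)

lemma parents_pair {v a b : V} (h2 : indeg N.arc v = 2) (hab : a ≠ b)
    (ha : N.arc a v = true) (hb : N.arc b v = true)
    {w : V} (hw : N.arc w v = true) : w = a ∨ w = b := by
  have hsub : ({a, b} : Finset V) ⊆ Finset.univ.filter (fun u => N.arc u v = true) := by
    intro x hx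
    rcases Finset.mem_insert.mp hx with rfl | hx
    · exact Finset.mem_filter.mpr ⟨Finset.mem_univ _, ha⟩
    · rw [Finset.mem_singleton] at hx; subst hx
      exact Finset.mem_filter.mpr ⟨Finset.mem_univ _, hb⟩
  have hcard : (Finset.univ.filter (fun u => N.arc u v = true)).card ≤ ({a, b} : Finset V).card := by
    rw [Finset.card_pair hab]; exact le_of_eq h2
  have heq := Finset.eq_of_subset_of_card_le hsub hcard
  have hwm : w ∈ ({a, b} : Finset V) := by
    rw [heq]; exact Finset.mem_filter.mpr ⟨Finset.mem_univ _, hw⟩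
  rcases Finset.mem_insert.mp hwm with rfl | hwm
  · exact Or.inl rfl
  · exact Or.inr (Finset.mem_singleton.mp hwm)

lemma exists_other_parent {r u : V} (h2 : indeg N.arc r = 2) (hu : N.arc u r = true) :
    ∃ u', u' ≠ u ∧ N.arc u' r = true := by
  have hum : u ∈ Finset.univ.filter (fun x => N.arc x r = true) :=
    Finset.mem_filter.mpr ⟨Finset.mem_univ _, hu⟩
  have h1 : 1 < (Finset.univ.filter (fun x => N.arc x r = true)).card := by
    rw [indeg] at h2; omega
  obtain ⟨b, hb, hbne⟩ := Finset.exists_mem_ne h1 u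
  exact ⟨b, hbne, (Finset.mem_filter.mp hb).2⟩

lemma exists_other_child {v c : V} (h2 : outdeg N.arc v = 2) (hc : N.arc v c = true) :
    ∃ c', c' ≠ c ∧ N.arc v c' = true := by
  have h1 : 1 < (Finset.univ.filter (fun w => N.arc v w = true)).card := by
    rw [outdeg] at h2; omega
  obtain ⟨b, hb, hbne⟩ := Finset.exists_mem_ne h1 c
  exact ⟨b, hbne, (Finset.mem_filter.mp hb).2⟩

lemma reach {v : V} (hv : v ≠ N.root) :
    Relation.TransGen (fun a b => N.arc a b = true) N.root v := by
  have : IsIrrefl V (Relation.TransGen fun a b : V => N.arc a b = true) := ⟨N.acyclic⟩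
  have hwf : WellFounded (Relation.TransGen fun a b : V => N.arc a b = true) :=
    Finite.wellFounded_of_trans_of_irrefl _
  refine hwf.induction
    (C := fun v => v ≠ N.root → Relation.TransGen (fun a b => N.arc a b = true) N.root v) v ?_ hv
  intro x ih hx
  obtain ⟨u, hu⟩ := N.exists_parent hx
  by_cases hur : u = N.root
  · exact hur ▸ Relation.TransGen.single hu
  · exact (ih u (Relation.TransGen.single hu) hur).tail hu

lemma parent_eq_root_of_only_child {c y : V} (honly : ∀ w, N.arc N.root w = true → w = c)
    (hy : N.arc y c = true) : y = N.root := by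
  by_contra hne
  have hreach := N.reach hne
  obtain ⟨w, hw, hrt⟩ := Relation.TransGen.head'_iff.mp hreach
  rw [honly w hw] at hrt
  rcases (Relation.reflTransGen_iff_eq_or_transGen.mp hrt) with h | htg
  · subst h; exact N.arc_irrefl _ hy
  · exact N.acyclic c (htg.tail hy)

end BinNet
namespace BinNet
variable {V : Type} [Fintype V] [DecidableEq V] (N : BinNet V)

open Classical in
lemma treeBased_of_matching (g : {v : V // N.IsOmnian v} → V)
    (hginj : Function.Injective g) (hgarc : ∀ u, N.arc u.1 (g u) = true) : N.TreeBased := by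
  classical
  -- the parent function
  set p : V → V := fun v =>
    if h : ∃ u : {x : V // N.IsOmnian x}, g u = v then (Classical.choose h).1
    else if h2 : ∃ u, N.arc u v = true then Classical.choose h2 else v with hp
  have harc : ∀ v, v ≠ N.root → N.arc (p v) v = true := by
    intro v hv
    by_cases h : ∃ u : {x : V // N.IsOmnian x}, g u = v
    · simp only [hp, dif_pos h]
      have hspec := Classical.choose_spec h
      have h3 := hgarc (Classical.choose h)
      rwa [hspec] at h3
    · obtain ⟨u, hu⟩ := N.exists_parent hv
      have h2 : ∃ u, N.arc u v = true := ⟨u, hu⟩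
      simp only [hp, dif_neg h, dif_pos h2]
      exact Classical.choose_spec h2
  refine ⟨fun u v => decide (v ≠ N.root ∧ p v = u), ⟨?_, ?_, ?_⟩, ?_⟩
  · intro u v hT
    rw [decide_eq_true_iff] at hT
    exact hT.2 ▸ harc v hT.1
  · intro u; simp
  · intro v hv
    rw [indeg]
    have : (Finset.univ.filter fun u => decide (v ≠ N.root ∧ p v = u) = true) = {p v} := by
      ext u
      simp only [Finset.mem_filter, Finset.mem_univ, true_and, decide_eq_true_iff,
        Finset.mem_singleton]
      constructor
      · rintro ⟨_, h⟩; exact h.symm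
      · rintro rfl; exact ⟨hv, rfl⟩
    rw [this, Finset.card_singleton]
  · -- no dummy leaves
    intro v hv
    by_contra hout
    -- we find a tree-outarc of v, contradicting outdeg T v = 0
    have hex : ∃ w, (decide (w ≠ N.root ∧ p w = v) = true) := by
      by_cases hom : N.IsOmnian v
      · refine ⟨g ⟨v, hom⟩, ?_⟩
        rw [decide_eq_true_iff]
        have hret : N.IsRetic (g ⟨v, hom⟩) := hom.2 _ (hgarc ⟨v, hom⟩)
        have hne : g ⟨v, hom⟩ ≠ N.root := N.retic_ne_root hret
        refine ⟨hne, ?_⟩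
        have h : ∃ u : {x : V // N.IsOmnian x}, g u = g ⟨v, hom⟩ := ⟨⟨v, hom⟩, rfl⟩
        simp only [hp, dif_pos h]
        have := Classical.choose_spec h
        have h2 : Classical.choose h = ⟨v, hom⟩ := hginj this
        rw [h2]
      · -- v has a non-reticulation child
        rw [BinNet.IsOmnian] at hom
        push_neg at hom
        obtain ⟨w, hw, hwret⟩ := hom hout
        refine ⟨w, ?_⟩
        rw [decide_eq_true_iff]
        have hwroot : w ≠ N.root := N.arc_ne_root hw
        refine ⟨hwroot, ?_⟩
        have hindeg : indeg N.arc w = 1 := by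
          rcases N.vertex_types w hwroot with ⟨h1, _⟩ | ⟨h1, _⟩ | ⟨h1, _⟩
          · exact h1
          · exact absurd h1 hwret
          · exact h1
        have h : ¬ ∃ u : {x : V // N.IsOmnian x}, g u = w := by
          rintro ⟨u, rfl⟩
          exact hwret (u.2.2 _ (hgarc u))
        have h2 : ∃ u, N.arc u w = true := ⟨v, hw⟩
        simp only [hp, dif_neg h, dif_pos h2]
        exact N.only_parent hindeg hw (Classical.choose_spec h2)
    obtain ⟨w, hw⟩ := hex
    have : 0 < outdeg (fun u v => decide (v ≠ N.root ∧ p v = u)) v :=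
      Finset.card_pos.mpr ⟨w, Finset.mem_filter.mpr ⟨Finset.mem_univ _, hw⟩⟩
    omega

end BinNet
namespace BinNet
variable {V : Type} [Fintype V] [DecidableEq V] (N : BinNet V)

lemma not_hasZigZag_of_treeBased (h : N.TreeBased) : ¬ N.HasZigZag := by
  obtain ⟨T, ⟨hTsub, hTroot, hTin⟩, hTleaf⟩ := h
  rintro ⟨k, hk, o, r, hoinj, hrinj, homn, hzig, hret0, hretl, hmax0, hmaxl⟩
  -- every o i has a T-out-arc which is some r j
  have key : ∀ i : Fin (k+1), ∃ j : Fin k, T (o i) (r j) = true := by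
    intro i
    -- o i is not a leaf of T
    have hnd : outdeg T (o i) ≠ 0 := fun h0 => (homn i).1 (hTleaf _ h0)
    obtain ⟨w, hw⟩ : ∃ w, T (o i) w = true := by
      have h1 : 0 < outdeg T (o i) := Nat.pos_of_ne_zero hnd
      rw [outdeg, Finset.card_pos] at h1
      obtain ⟨w, hw⟩ := h1
      exact ⟨w, (Finset.mem_filter.mp hw).2⟩
    have hwarc : N.arc (o i) w = true := hTsub _ _ hw
    have hwret : N.IsRetic w := (homn i).2 _ hwarc
    -- find j with r j = w
    rcases Nat.eq_zero_or_pos i.val with h0 | hpos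
    · have hi : i = 0 := by ext; simp [h0]
      obtain ⟨j, hj⟩ := hmax0 w (hi ▸ hwarc) hwret
      exact ⟨j, hj ▸ (hi ▸ hw)⟩
    rcases Nat.lt_or_ge i.val k with hlt | hge
    · -- middle vertex: children of o i are exactly r (i-1) and r i
      set j1 : Fin k := ⟨i.val - 1, by omega⟩ with hj1
      set j2 : Fin k := ⟨i.val, hlt⟩ with hj2
      have hj1succ : j1.succ = i := by ext; simp [hj1]; omega
      have hj2cast : j2.castSucc = i := by ext; simp [hj2]
      have ha1 : N.arc (o i) (r j1) = true := by
        have := (hzig j1).2.2; rwa [hj1succ] at this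
      have ha2 : N.arc (o i) (r j2) = true := by
        have := (hzig j2).2.1; rwa [hj2cast] at this
      have hne : r j1 ≠ r j2 := by
        intro hEq
        have := hrinj hEq
        rw [Fin.ext_iff] at this
        simp [hj1, hj2] at this
        omega
      rcases N.children_pair hne ha1 ha2 hwarc with rfl | rfl
      · exact ⟨j1, hw⟩
      · exact ⟨j2, hw⟩
    · -- last vertex
      have hi : i = Fin.last k := by ext; simp [Fin.last]; omega
      obtain ⟨j, hj⟩ := hmaxl w (hi ▸ hwarc) hwret
      exact ⟨j, hj ▸ (hi ▸ hw)⟩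
  choose f hf using key
  have hfinj : Function.Injective f := by
    intro i i' hEq
    -- r (f i) has a unique T-parent
    have hne : r (f i) ≠ N.root := N.retic_ne_root ((hzig (f i)).1)
    have hone := hTin _ hne
    have h1 := hf i
    have h2 := hf i'
    rw [← hEq] at h2
    -- both o i and o i' are T-parents of r (f i)
    exact (hoinj (indeg_one_unique hone h1 h2)).symm
  have := Fintype.card_le_of_injective f hfinj
  simp only [Fintype.card_fin] at this
  omega

end BinNet
/-- Auxiliary: a zig-zag walk of length `m` inside a bad set. -/
structure ZWalk {V : Type} [Fintype V] [DecidableEq V] (N : BinNet V)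
    (sV tV : Finset V) (m : ℕ) (o r : ℕ → V) : Prop where
  oinj : ∀ i j, i ≤ m → j ≤ m → o i = o j → i = j
  rinj : ∀ i j, i < m → j < m → r i = r j → i = j
  zig : ∀ i, i < m → N.arc (o i) (r i) = true ∧ N.arc (o (i+1)) (r i) = true
  os : ∀ i, i ≤ m → o i ∈ sV
  rt : ∀ i, i < m → r i ∈ tV
  start : outdeg N.arc (o 0) = 1
  inner : ∀ i, 0 < i → i < m → outdeg N.arc (o i) = 2

namespace BinNet
variable {V : Type} [Fintype V] [DecidableEq V] (N : BinNet V)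

lemma walk_extend {sV tV : Finset V} {m : ℕ} {o r : ℕ → V}
    (F2 : ∀ x ∈ tV, N.IsRetic x)
    (F3 : ∀ x ∈ tV, ∀ w, N.arc w x = true → w ∈ sV)
    (F4 : ∀ v ∈ sV, ∀ w, N.arc v w = true → w ∈ tV)
    (hm : 1 ≤ m) (W : ZWalk N sV tV m o r) (h2 : outdeg N.arc (o m) = 2) :
    ∃ o' r', ZWalk N sV tV (m+1) o' r' := by
  have hprev : N.arc (o m) (r (m-1)) = true := by
    have h := (W.zig (m-1) (by omega)).2
    have hEq : m - 1 + 1 = m := by omega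
    rwa [hEq] at h
  obtain ⟨c, hcne, hc⟩ := N.exists_other_child h2 hprev
  have hct : c ∈ tV := F4 _ (W.os m le_rfl) _ hc
  have hcfresh : ∀ j, j < m → r j ≠ c := by
    intro j hj hEq
    subst hEq
    by_cases hjm : j = m - 1
    · exact hcne (by rw [hjm])
    · have hz := W.zig j hj
      have hretj : N.IsRetic (r j) := F2 _ (W.rt j hj)
      have hone : o j ≠ o (j+1) := fun hE => by
        have := W.oinj j (j+1) (by omega) (by omega) hE; omega
      rcases N.parents_pair hretj hone hz.1 hz.2 hc with hE | hE
      · have := W.oinj m j le_rfl (by omega) hE; omega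
      · have := W.oinj m (j+1) le_rfl (by omega) hE; omega
  have hcret : N.IsRetic c := F2 _ hct
  obtain ⟨q, hqne, hq⟩ := N.exists_other_parent hcret hc
  have hqs : q ∈ sV := F3 _ hct _ hq
  have hqfresh : ∀ j, j ≤ m → o j ≠ q := by
    intro j hj hEq
    by_cases hjm : j = m
    · exact hqne (by rw [← hEq, hjm])
    by_cases hj0 : j = 0
    · subst hj0
      have h00 : N.arc (o 0) (r 0) = true := (W.zig 0 (by omega)).1
      have hc0 : c = r 0 := N.only_child W.start h00 (hEq ▸ hq)
      exact hcfresh 0 (by omega) hc0.symm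
    · have hjlt : j < m := by omega
      have hj2 : outdeg N.arc (o j) = 2 := W.inner j (by omega) hjlt
      have ha1 : N.arc (o j) (r (j-1)) = true := by
        have h := (W.zig (j-1) (by omega)).2
        have hE : j - 1 + 1 = j := by omega
        rwa [hE] at h
      have ha2 : N.arc (o j) (r j) = true := (W.zig j hjlt).1
      have hner : r (j-1) ≠ r j := fun hE => by
        have := W.rinj (j-1) j (by omega) hjlt hE; omega
      rcases N.children_pair hner ha1 ha2 (hEq ▸ hq) with hE | hE
      · exact hcfresh (j-1) (by omega) hE.symm
      · exact hcfresh j hjlt hE.symm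
  refine ⟨Function.update o (m+1) q, Function.update r m c, ?_⟩
  have ho1 : ∀ i, i ≤ m → Function.update o (m+1) q i = o i := fun i hi =>
    Function.update_of_ne (by omega) _ _
  have ho2 : Function.update o (m+1) q (m+1) = q := Function.update_self _ _ _
  have hr1 : ∀ i, i < m → Function.update r m c i = r i := fun i hi =>
    Function.update_of_ne (by omega) _ _
  have hr2 : Function.update r m c m = c := Function.update_self _ _ _
  constructor
  · intro i j hi hj hEq
    by_cases him : i = m + 1 <;> by_cases hjm : j = m + 1
    · omega
    · exfalso; subst him
      rw [ho2, ho1 j (by omega)] at hEq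
      exact hqfresh j (by omega) hEq.symm
    · exfalso; subst hjm
      rw [ho2, ho1 i (by omega)] at hEq
      exact hqfresh i (by omega) hEq
    · rw [ho1 i (by omega), ho1 j (by omega)] at hEq
      exact W.oinj i j (by omega) (by omega) hEq
  · intro i j hi hj hEq
    by_cases him : i = m <;> by_cases hjm : j = m
    · omega
    · exfalso; subst him
      rw [hr2, hr1 j (by omega)] at hEq
      exact hcfresh j (by omega) hEq.symm
    · exfalso; subst hjm
      rw [hr2, hr1 i (by omega)] at hEq
      exact hcfresh i (by omega) hEq
    · rw [hr1 i (by omega), hr1 j (by omega)] at hEq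
      exact W.rinj i j (by omega) (by omega) hEq
  · intro i hi
    by_cases him : i = m
    · subst him
      rw [hr2, ho1 i le_rfl, ho2]
      exact ⟨hc, hq⟩
    · rw [hr1 i (by omega), ho1 i (by omega), ho1 (i+1) (by omega)]
      exact W.zig i (by omega)
  · intro i hi
    by_cases him : i = m + 1
    · subst him; rw [ho2]; exact hqs
    · rw [ho1 i (by omega)]; exact W.os i (by omega)
  · intro i hi
    by_cases him : i = m
    · subst him; rw [hr2]; exact hct
    · rw [hr1 i (by omega)]; exact W.rt i (by omega)
  · rw [ho1 0 (by omega)]; exact W.start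
  · intro i h0 hi
    by_cases him : i = m
    · subst him; rw [ho1 i le_rfl]; exact h2
    · rw [ho1 i (by omega)]; exact W.inner i h0 (by omega)

end BinNet
namespace BinNet
variable {V : Type} [Fintype V] [DecidableEq V] (N : BinNet V)

lemma zigzag_of_walk_stop {sV tV : Finset V} {m : ℕ} {o r : ℕ → V}
    (F1 : ∀ v ∈ sV, N.IsOmnian v) (F2 : ∀ x ∈ tV, N.IsRetic x)
    (hm : 1 ≤ m) (W : ZWalk N sV tV m o r) (hstop : outdeg N.arc (o m) = 1) :
    N.HasZigZag := by
  have retic0 : N.IsRetic (o 0) := by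
    have h00 : N.arc (o 0) (r 0) = true := (W.zig 0 (by omega)).1
    have h10 : N.arc (o 1) (r 0) = true := (W.zig 0 (by omega)).2
    have hne : o 1 ≠ o 0 := fun hE => by have := W.oinj 1 0 (by omega) (by omega) hE; omega
    have hroot : o 0 ≠ N.root := by
      intro hEq
      refine hne ?_
      rw [hEq]
      refine N.parent_eq_root_of_only_child (c := r 0) (fun w hw => ?_) h10
      exact N.only_child (hEq ▸ W.start) (hEq ▸ h00) hw
    rcases N.vertex_types _ hroot with ⟨h1, h2⟩ | ⟨h1, h2⟩ | ⟨h1, h2⟩ <;>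
      first
        | (exact absurd W.start (by omega))
        | exact h1
  have hprev : N.arc (o m) (r (m-1)) = true := by
    have h := (W.zig (m-1) (by omega)).2
    have hEq : m - 1 + 1 = m := by omega
    rwa [hEq] at h
  have reticm : N.IsRetic (o m) := by
    have hpm : N.arc (o (m-1)) (r (m-1)) = true := (W.zig (m-1) (by omega)).1
    have hne : o (m-1) ≠ o m := fun hE => by
      have := W.oinj (m-1) m (by omega) le_rfl hE; omega
    have hroot : o m ≠ N.root := by
      intro hEq
      refine hne ?_
      rw [hEq]
      refine N.parent_eq_root_of_only_child (c := r (m-1)) (fun w hw => ?_) hpm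
      exact N.only_child (hEq ▸ hstop) (hEq ▸ hprev) hw
    rcases N.vertex_types _ hroot with ⟨h1, h2⟩ | ⟨h1, h2⟩ | ⟨h1, h2⟩ <;>
      first
        | (exact absurd hstop (by omega))
        | exact h1
  refine ⟨m, hm, (fun i => o i.val), (fun i => r i.val), ?_, ?_, ?_, ?_, ?_, ?_, ?_, ?_⟩
  · intro i j hEq
    exact Fin.ext (W.oinj i.val j.val (by omega) (by omega) hEq)
  · intro i j hEq
    exact Fin.ext (W.rinj i.val j.val i.isLt j.isLt hEq)
  · intro i
    exact F1 _ (W.os i.val (by omega))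
  · intro i
    refine ⟨F2 _ (W.rt i.val i.isLt), ?_, ?_⟩
    · simpa using (W.zig i.val i.isLt).1
    · simpa using (W.zig i.val i.isLt).2
  · simpa using retic0
  · simpa using reticm
  · intro w hw _
    have h00 : N.arc (o 0) (r 0) = true := (W.zig 0 (by omega)).1
    have : w = r 0 := N.only_child (by simpa using W.start) h00 (by simpa using hw)
    exact ⟨⟨0, by omega⟩, this.symm⟩
  · intro w hw _
    have : w = r (m-1) := N.only_child (by simpa using hstop) hprev (by simpa using hw)
    refine ⟨⟨m-1, by omega⟩, this.symm⟩

lemma hasZigZag_of_bad_set {sV tV : Finset V}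
    (F1 : ∀ v ∈ sV, N.IsOmnian v) (F2 : ∀ x ∈ tV, N.IsRetic x)
    (F3 : ∀ x ∈ tV, ∀ w, N.arc w x = true → w ∈ sV)
    (F4 : ∀ v ∈ sV, ∀ w, N.arc v w = true → w ∈ tV)
    (F5 : ∃ v ∈ sV, outdeg N.arc v = 1) : N.HasZigZag := by
  -- termination induction
  have main : ∀ d m o r, 1 ≤ m → ZWalk N sV tV m o r → sV.card ≤ m + d → N.HasZigZag := by
    intro d
    induction d with
    | zero =>
      intro m o r hm W hcard
      exfalso
      have hle : (Finset.range (m+1)).card ≤ sV.card := by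
        refine Finset.card_le_card_of_injOn o (fun i hi => ?_) (fun i hi j hj hEq => ?_)
        · exact W.os i (by simpa using Nat.lt_succ_iff.mp (Finset.mem_range.mp hi))
        · exact W.oinj i j (Nat.lt_succ_iff.mp (Finset.mem_range.mp hi))
            (Nat.lt_succ_iff.mp (Finset.mem_range.mp hj)) hEq
      rw [Finset.card_range] at hle
      omega
    | succ d ih =>
      intro m o r hm W hcard
      by_cases hstop : outdeg N.arc (o m) = 1
      · exact N.zigzag_of_walk_stop F1 F2 hm W hstop
      · have hom : N.IsOmnian (o m) := F1 _ (W.os m le_rfl)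
        have h2 : outdeg N.arc (o m) = 2 := by
          have := N.outdeg_le_two (o m)
          have := hom.1
          omega
        obtain ⟨o', r', W'⟩ := N.walk_extend F2 F3 F4 hm W h2
        exact ih (m+1) o' r' (by omega) W' (by omega)
  -- initial walk of length 1
  obtain ⟨u, hu, hu1⟩ := F5
  obtain ⟨c, hc⟩ := N.exists_child (v := u) (by omega)
  have hct : c ∈ tV := F4 _ hu _ hc
  have hcret : N.IsRetic c := F2 _ hct
  obtain ⟨q, hqne, hq⟩ := N.exists_other_parent hcret hc
  have hqs : q ∈ sV := F3 _ hct _ hq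
  have W1 : ZWalk N sV tV 1 (fun i => if i = 0 then u else q) (fun _ => c) := by
    constructor
    · intro i j hi hj hEq
      interval_cases i <;> interval_cases j <;> simp_all
    · intro i j hi hj _; omega
    · intro i hi
      have hi0 : i = 0 := by omega
      subst hi0
      simp [hc, hq]
    · intro i hi
      interval_cases i <;> simp [hu, hqs]
    · intro i hi; exact hct
    · simpa using hu1
    · intro i h0 hi; omega
  exact main sV.card 1 _ _ le_rfl W1 (by omega)

end BinNet
namespace BinNet
variable {V : Type} [Fintype V] [DecidableEq V] (N : BinNet V)

lemma hasZigZag_of_no_matching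
    (h : ¬ ∃ f : {v : V // N.IsOmnian v} → V, Function.Injective f ∧
        ∀ x : {v : V // N.IsOmnian v},
          f x ∈ Finset.univ.filter (fun w => N.arc x.1 w = true)) :
    N.HasZigZag := by
  classical
  set ch : {v : V // N.IsOmnian v} → Finset V :=
    fun u => Finset.univ.filter (fun w => N.arc u.1 w = true) with hch
  rw [← Finset.all_card_le_biUnion_card_iff_exists_injective] at h
  push_neg at h
  obtain ⟨s0, hs0⟩ := h
  have claim : ∀ s : Finset {v : V // N.IsOmnian v},
      (s.biUnion ch).card < s.card → N.HasZigZag := by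
    intro s
    induction s using Finset.strongInduction with
    | _ s ihs =>
      intro hviol
      by_cases hex : ∃ u ∈ s, ((s.erase u).biUnion ch).card < (s.erase u).card
      · obtain ⟨u, hu, hviol'⟩ := hex
        exact ihs (s.erase u) (Finset.erase_ssubset hu) hviol'
      push_neg at hex
      set t := s.biUnion ch with ht
      have hbueq : ∀ u ∈ s, (s.erase u).biUnion ch = t := by
        intro u hu
        refine Finset.eq_of_subset_of_card_le
          (Finset.biUnion_subset_biUnion_of_subset_left _ (Finset.erase_subset _ _)) ?_
        have h1 := hex u hu
        rw [Finset.card_erase_of_mem hu] at h1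
        omega
      -- every element of t has exactly two parents, both in s
      have key : ∀ x ∈ t, ∃ u1 u2 : {v : V // N.IsOmnian v}, u1 ∈ s ∧ u2 ∈ s ∧ u1 ≠ u2 ∧
          x ∈ ch u1 ∧ x ∈ ch u2 ∧ ∀ w, N.arc w x = true → w = u1.1 ∨ w = u2.1 := by
        intro x hx
        obtain ⟨u1, hu1, hxu1⟩ := Finset.mem_biUnion.mp hx
        have hx2 : x ∈ (s.erase u1).biUnion ch := (hbueq u1 hu1) ▸ hx
        obtain ⟨u2, hu2, hxu2⟩ := Finset.mem_biUnion.mp hx2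
        have hu2s : u2 ∈ s := Finset.mem_of_mem_erase hu2
        have hne : u2 ≠ u1 := Finset.ne_of_mem_erase hu2
        have harc1 : N.arc u1.1 x = true := (Finset.mem_filter.mp hxu1).2
        have harc2 : N.arc u2.1 x = true := (Finset.mem_filter.mp hxu2).2
        have hret : N.IsRetic x := u1.2.2 _ harc1
        have hvalne : u1.1 ≠ u2.1 := fun hE => hne (Subtype.ext hE.symm)
        exact ⟨u1, u2, hu1, hu2s, hne.symm, hxu1, hxu2,
          fun w hw => N.parents_pair hret hvalne harc1 harc2 hw⟩
      -- facts for the bad set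
      set sV : Finset V := s.image Subtype.val with hsV
      have F1 : ∀ v ∈ sV, N.IsOmnian v := by
        intro v hv
        obtain ⟨u, _, rfl⟩ := Finset.mem_image.mp hv
        exact u.2
      have F2 : ∀ x ∈ t, N.IsRetic x := by
        intro x hx
        obtain ⟨u1, _, _, _, _, hxu1, _, _⟩ := key x hx
        exact u1.2.2 _ (Finset.mem_filter.mp hxu1).2
      have F3 : ∀ x ∈ t, ∀ w, N.arc w x = true → w ∈ sV := by
        intro x hx w hw
        obtain ⟨u1, u2, hu1, hu2, _, _, _, hpar⟩ := key x hx
        rcases hpar w hw with rfl | rfl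
        · exact Finset.mem_image.mpr ⟨u1, hu1, rfl⟩
        · exact Finset.mem_image.mpr ⟨u2, hu2, rfl⟩
      have F4 : ∀ v ∈ sV, ∀ w, N.arc v w = true → w ∈ t := by
        intro v hv w hw
        obtain ⟨u, hu, rfl⟩ := Finset.mem_image.mp hv
        exact Finset.mem_biUnion.mpr ⟨u, hu,
          Finset.mem_filter.mpr ⟨Finset.mem_univ _, hw⟩⟩
      -- double counting to find an outdegree-one vertex in s
      have F5 : ∃ v ∈ sV, outdeg N.arc v = 1 := by
        by_contra hno
        push_neg at hno
        have hall2 : ∀ u ∈ s, (ch u).card = 2 := by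
          intro u hu
          have h1 : (ch u).card = outdeg N.arc u.1 := rfl
          have h2 : outdeg N.arc u.1 ≤ 2 := N.outdeg_le_two _
          have h3 : outdeg N.arc u.1 ≠ 0 := u.2.1
          have h4 : outdeg N.arc u.1 ≠ 1 :=
            hno u.1 (Finset.mem_image.mpr ⟨u, hu, rfl⟩)
          omega
        have hsum : ∑ u ∈ s, (ch u).card = ∑ x ∈ t, (s.filter (fun u => x ∈ ch u)).card := by
          have hsub : ∀ u ∈ s, ch u ⊆ t := fun u hu => Finset.subset_biUnion_of_mem ch hu
          calc ∑ u ∈ s, (ch u).card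
              = ∑ u ∈ s, (t.filter (fun x => x ∈ ch u)).card := by
                refine Finset.sum_congr rfl (fun u hu => ?_)
                congr 1
                ext x
                simp only [Finset.mem_filter]
                exact ⟨fun h => ⟨hsub u hu h, h⟩, fun h => h.2⟩
            _ = ∑ u ∈ s, ∑ x ∈ t, (if x ∈ ch u then 1 else 0) := by
                refine Finset.sum_congr rfl (fun u hu => ?_)
                rw [Finset.card_filter]
            _ = ∑ x ∈ t, ∑ u ∈ s, (if x ∈ ch u then 1 else 0) := Finset.sum_comm
            _ = ∑ x ∈ t, (s.filter (fun u => x ∈ ch u)).card := by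
                refine Finset.sum_congr rfl (fun x hx => ?_)
                rw [Finset.card_filter]
        have htwo : ∀ x ∈ t, (s.filter (fun u => x ∈ ch u)).card = 2 := by
          intro x hx
          obtain ⟨u1, u2, hu1, hu2, hne, hxu1, hxu2, hpar⟩ := key x hx
          have heq : s.filter (fun u => x ∈ ch u) = {u1, u2} := by
            ext a
            simp only [Finset.mem_filter, Finset.mem_insert, Finset.mem_singleton]
            constructor
            · rintro ⟨has, hxa⟩
              have harca : N.arc a.1 x = true := (Finset.mem_filter.mp hxa).2
              rcases hpar a.1 harca with hE | hE
              · exact Or.inl (Subtype.ext hE)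
              · exact Or.inr (Subtype.ext hE)
            · rintro (rfl | rfl)
              · exact ⟨hu1, hxu1⟩
              · exact ⟨hu2, hxu2⟩
          rw [heq, Finset.card_pair hne]
        rw [Finset.sum_congr rfl hall2, Finset.sum_congr rfl htwo] at hsum
        simp only [Finset.sum_const, smul_eq_mul] at hsum
        omega
      exact N.hasZigZag_of_bad_set F1 F2 F3 F4 F5
  exact claim s0 hs0

theorem stmt_9' (N : BinNet V) : N.TreeBased ↔ ¬ N.HasZigZag := by
  constructor
  · exact N.not_hasZigZag_of_treeBased
  · intro hz
    by_cases hm : ∃ f : {v : V // N.IsOmnian v} → V, Function.Injective f ∧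
        ∀ x : {v : V // N.IsOmnian v},
          f x ∈ Finset.univ.filter (fun w => N.arc x.1 w = true)
    · obtain ⟨f, hfinj, hf⟩ := hm
      exact N.treeBased_of_matching f hfinj
        (fun u => (Finset.mem_filter.mp (hf u)).2)
    · exact absurd (N.hasZigZag_of_no_matching hm) hz

end BinNet

/-- A binary phylogenetic network is tree-based if and only if it
contains no such (maximal) zig-zag path. -/
theorem stmt_9 {V : Type} [Fintype V] [DecidableEq V] (N : BinNet V) :
    N.TreeBased ↔ ¬ N.HasZigZag := by
  exact N.stmt_9'
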